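/- Let Δ = (Δ₁,…,Δ_m) be C¹ functions on B_σ(0) ⊂ ℝⁿ each satisfying an equation of the form ∂Δ_k/∂x_{ℓ(k)}(x) = Σ_j A_{kj}(x) Δ_j(x) with continuous bounded coefficients A_{kj}, and suppose Δ_k vanishes identically on the hyperplane {x_{ℓ(k)} = 0}. Then Δ ≡ 0 on a neighborhood of 0. -/

import Mathlib

/-!
Work on the ℓ¹ ball of radius `ε ≤ σ`, which is compact and stable under moving one coordinate
towards `0`. Let `S` be the maximum over it of `max_k |Δ_k|`, attained at `x₀`. Sliding `x₀` along
the `x_{ℓ(k)}`-axis down to the hyperplane, where `Δ_k` vanishes, the derivative of `Δ_k` is at most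
`m C S` with `C` a bound for the coefficients, so `|Δ_k(x₀)| ≤ m C S ε`. Hence `S ≤ m C ε S`, and
`S = 0` once `m C ε < 1`.
-/

open Set Function

section L1Ball

variable {ι : Type*} [Fintype ι]

def l1ClosedBall (r : ℝ) : Set (ι → ℝ) := {x | ∑ i, |x i| ≤ r}

theorem mem_l1ClosedBall {r : ℝ} {x : ι → ℝ} : x ∈ l1ClosedBall r ↔ ∑ i, |x i| ≤ r := Iff.rfl

theorem l1ClosedBall_mono {r s : ℝ} (h : r ≤ s) :
    l1ClosedBall r ⊆ (l1ClosedBall s : Set (ι → ℝ)) :=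
  fun _ hx => hx.trans h

theorem zero_mem_l1ClosedBall {r : ℝ} (hr : 0 ≤ r) : (0 : ι → ℝ) ∈ l1ClosedBall r := by
  simpa [mem_l1ClosedBall] using hr

theorem abs_le_of_mem_l1ClosedBall {r : ℝ} {x : ι → ℝ} (hx : x ∈ l1ClosedBall r) (i : ι) :
    |x i| ≤ r :=
  (Finset.single_le_sum (fun j _ => abs_nonneg (x j)) (Finset.mem_univ i)).trans hx

theorem isCompact_l1ClosedBall (r : ℝ) : IsCompact (l1ClosedBall r : Set (ι → ℝ)) := by
  refine Metric.isCompact_of_isClosed_isBounded (isClosed_le (by fun_prop) continuous_const)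
    (isBounded_iff_forall_norm_le.2 ⟨r, fun x hx => ?_⟩)
  have hr : 0 ≤ r := (Finset.sum_nonneg fun i _ => abs_nonneg (x i)).trans hx
  exact (pi_norm_le_iff_of_nonneg hr).2 (abs_le_of_mem_l1ClosedBall hx)

theorem update_mem_l1ClosedBall [DecidableEq ι] {r : ℝ} {x : ι → ℝ} (hx : x ∈ l1ClosedBall r)
    (i : ι) {t : ℝ} (ht : t ∈ uIcc 0 (x i)) : update x i t ∈ l1ClosedBall r := by
  refine (Finset.sum_le_sum fun j _ => ?_).trans (mem_l1ClosedBall.1 hx)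
  rcases eq_or_ne j i with rfl | hj
  · simpa using abs_sub_left_of_mem_uIcc ht
  · rw [update_of_ne hj]

end L1Ball

theorem exists_nonneg_forall_abs_le {κ X : Type*} [Finite κ] {f : κ → X → ℝ} {s : Set X}
    (h : ∀ k, ∃ C, ∀ x ∈ s, |f k x| ≤ C) : ∃ C, 0 ≤ C ∧ ∀ k, ∀ x ∈ s, |f k x| ≤ C := by
  choose C hC using h
  obtain ⟨M, hM⟩ := (Set.finite_range C).bddAbove
  exact ⟨max M 0, le_max_right _ _, fun k x hx =>
    (hC k x hx).trans ((hM (mem_range_self k)).trans (le_max_left _ _))⟩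

theorem abs_sum_mul_le {κ : Type*} [Fintype κ] {a b : κ → ℝ} {C S : ℝ} (hC₀ : 0 ≤ C)
    (ha : ∀ j, |a j| ≤ C) (hb : ∀ j, |b j| ≤ S) : |∑ j, a j * b j| ≤ Fintype.card κ * C * S :=
  calc |∑ j, a j * b j| ≤ ∑ j, |a j| * |b j| := by
        simpa only [abs_mul] using Finset.abs_sum_le_sum_abs (fun j => a j * b j) Finset.univ
    _ ≤ ∑ _j : κ, C * S :=
        Finset.sum_le_sum fun j _ => mul_le_mul (ha j) (hb j) (abs_nonneg _) hC₀
    _ = Fintype.card κ * C * S := by simp [mul_assoc]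

theorem abs_le_mul_abs_of_hasDerivWithinAt_uIcc {g g' : ℝ → ℝ} {b B : ℝ} (h0 : g 0 = 0)
    (hg : ∀ t ∈ uIcc 0 b, HasDerivWithinAt g (g' t) (uIcc 0 b) t)
    (hB : ∀ t ∈ uIcc 0 b, |g' t| ≤ B) : |g b| ≤ B * |b| := by
  simpa [h0] using
    (convex_uIcc 0 b).norm_image_sub_le_of_norm_hasDerivWithin_le hg hB left_mem_uIcc right_mem_uIcc

section LinearSystem

variable {ι κ : Type*} [DecidableEq ι] [Fintype κ]

def SolvesLinearSystemOn (s : Set (ι → ℝ)) (Δ : κ → (ι → ℝ) → ℝ) (ℓ : κ → ι)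
    (A : κ → κ → (ι → ℝ) → ℝ) : Prop :=
  ∀ x ∈ s, ∀ k, HasDerivWithinAt (fun t => Δ k (update x (ℓ k) t)) (∑ j, A k j x * Δ j x)
    {t | update x (ℓ k) t ∈ s} (x (ℓ k))

variable {Δ : κ → (ι → ℝ) → ℝ} {ℓ : κ → ι} {A : κ → κ → (ι → ℝ) → ℝ}

theorem SolvesLinearSystemOn.mono {s t : Set (ι → ℝ)} (h : SolvesLinearSystemOn t Δ ℓ A)
    (hst : s ⊆ t) : SolvesLinearSystemOn s Δ ℓ A :=
  fun x hx k => (h x (hst hx) k).mono fun _ hy => hst hy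

variable [Fintype ι] {r C S : ℝ}

theorem SolvesLinearSystemOn.abs_le (hsol : SolvesLinearSystemOn (l1ClosedBall r) Δ ℓ A)
    (hdata : ∀ x ∈ l1ClosedBall r, ∀ k, x (ℓ k) = 0 → Δ k x = 0)
    (hC₀ : 0 ≤ C) (hC : ∀ k j, ∀ x ∈ l1ClosedBall r, |A k j x| ≤ C)
    (hS : ∀ j, ∀ x ∈ l1ClosedBall r, |Δ j x| ≤ S) {x : ι → ℝ} (hx : x ∈ l1ClosedBall r)
    (k : κ) : |Δ k x| ≤ Fintype.card κ * C * S * r := by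
  have hseg : ∀ t ∈ uIcc 0 (x (ℓ k)), update x (ℓ k) t ∈ l1ClosedBall r :=
    fun t ht => update_mem_l1ClosedBall hx (ℓ k) ht
  have hS₀ : 0 ≤ S := (abs_nonneg _).trans (hS k x hx)
  have hline := abs_le_mul_abs_of_hasDerivWithinAt_uIcc (g := fun t => Δ k (update x (ℓ k) t))
    (g' := fun t => ∑ j, A k j (update x (ℓ k) t) * Δ j (update x (ℓ k) t))
    (hdata _ (hseg 0 left_mem_uIcc) k (update_self ..))
    (fun t ht => by
      have h := hsol _ (hseg t ht) k
      simp only [update_idem, update_self] at h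
      exact h.mono hseg)
    (fun t ht => abs_sum_mul_le hC₀ (fun j => hC k j _ (hseg t ht)) fun j => hS j _ (hseg t ht))
  rw [update_eq_self] at hline
  exact hline.trans (mul_le_mul_of_nonneg_left (abs_le_of_mem_l1ClosedBall hx _)
    (mul_nonneg (mul_nonneg (Nat.cast_nonneg _) hC₀) hS₀))

theorem SolvesLinearSystemOn.eq_zero (hr : 0 ≤ r)
    (hsol : SolvesLinearSystemOn (l1ClosedBall r) Δ ℓ A)
    (hdata : ∀ x ∈ l1ClosedBall r, ∀ k, x (ℓ k) = 0 → Δ k x = 0)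
    (hC₀ : 0 ≤ C) (hC : ∀ k j, ∀ x ∈ l1ClosedBall r, |A k j x| ≤ C)
    (hcont : ContinuousOn (fun x k => Δ k x) (l1ClosedBall r))
    (hsmall : Fintype.card κ * C * r < 1) :
    ∀ x ∈ l1ClosedBall r, ∀ k, Δ k x = 0 := by
  obtain ⟨x₀, hx₀, hmax⟩ :=
    (isCompact_l1ClosedBall r).exists_isMaxOn ⟨0, zero_mem_l1ClosedBall hr⟩ hcont.norm
  set S := ‖fun k => Δ k x₀‖
  have hS : ∀ j, ∀ x ∈ l1ClosedBall r, |Δ j x| ≤ S :=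
    fun j x hx => (norm_le_pi_norm (fun k => Δ k x) j).trans (hmax hx)
  have hS_le : S ≤ Fintype.card κ * C * r * S :=
    (pi_norm_le_iff_of_nonneg (mul_nonneg (mul_nonneg (mul_nonneg (Nat.cast_nonneg _) hC₀) hr)
      (norm_nonneg _))).2 fun k => (hsol.abs_le hdata hC₀ hC hS hx₀ k).trans_eq (by ring)
  have hS_nonpos : S ≤ 0 := by nlinarith [norm_nonneg (fun k => Δ k x₀)]
  exact fun x hx k => abs_nonpos_iff.1 ((hS k x hx).trans hS_nonpos)

end LinearSystem

theorem darboux_linear_homogeneous_vanishing_general (n m : ℕ) (σ : ℝ) (hσ : 0 < σ)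
    (Δ : Fin m → (Fin n → ℝ) → ℝ) (ℓ : Fin m → Fin n)
    (A : Fin m → Fin m → (Fin n → ℝ) → ℝ)
    (hAb : ∀ k j, ∃ C : ℝ, ∀ x : Fin n → ℝ, (∑ i, |x i| ≤ σ) → |A k j x| ≤ C)
    (hΔ : ContDiffOn ℝ 1 (fun x k => Δ k x) {x : Fin n → ℝ | ∑ i, |x i| ≤ σ})
    (heq : ∀ x : Fin n → ℝ, (∑ i, |x i| ≤ σ) → ∀ k,
      HasDerivWithinAt (fun t => Δ k (Function.update x (ℓ k) t))
        (∑ j, A k j x * Δ j x)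
        {t : ℝ | ∑ i, |Function.update x (ℓ k) t i| ≤ σ} (x (ℓ k)))
    (hdata : ∀ x : Fin n → ℝ, (∑ i, |x i| ≤ σ) → ∀ k, x (ℓ k) = 0 → Δ k x = 0) :
    ∃ ε > 0, ∀ x : Fin n → ℝ, (∑ i, |x i| ≤ ε) → ∀ k, Δ k x = 0 := by
  obtain ⟨C, hC₀, hC⟩ := exists_nonneg_forall_abs_le (s := l1ClosedBall σ)
    fun p : Fin m × Fin m => hAb p.1 p.2
  obtain ⟨c, hc, hcC⟩ := exists_pos_mul_lt one_pos (m * C)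
  set ε := min σ c
  have hε : 0 < ε := lt_min hσ hc
  have hεσ : l1ClosedBall ε ⊆ (l1ClosedBall σ : Set (Fin n → ℝ)) :=
    l1ClosedBall_mono (min_le_left _ _)
  have hsol : SolvesLinearSystemOn (l1ClosedBall σ) Δ ℓ A := heq
  refine ⟨ε, hε, (hsol.mono hεσ).eq_zero hε.le
    (fun x hx => hdata x (hεσ hx)) hC₀ (fun k j x hx => hC (k, j) x (hεσ hx))
    (hΔ.continuousOn.mono hεσ) ?_⟩
  rw [Fintype.card_fin]
  exact (mul_le_mul_of_nonneg_left (min_le_right _ _)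
    (mul_nonneg (Nat.cast_nonneg _) hC₀)).trans_lt hcC

/-- Linear homogeneous uniqueness statement (the key final step in the proof of
Darboux's theorem on overdetermined systems): C¹ functions `Δ₁, …, Δ_m` on the
ℓ¹ ball `B_σ(0) ⊆ ℝⁿ`, each satisfying a determined linear homogeneous equation
`∂Δ_k/∂x_{ℓ(k)} = Σ_j A_{kj} Δ_j` with continuous bounded coefficients and
vanishing identically on the hyperplane `{x_{ℓ(k)} = 0}`, vanish identically on a
neighborhood of `0`. -/
theorem darboux_linear_homogeneous_vanishing (n m : ℕ) (σ : ℝ) (hσ : 0 < σ)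
    (Δ : Fin m → (Fin n → ℝ) → ℝ) (ℓ : Fin m → Fin n)
    (A : Fin m → Fin m → (Fin n → ℝ) → ℝ)
    (hAc : ∀ k j, ContinuousOn (A k j) {x : Fin n → ℝ | ∑ i, |x i| ≤ σ})
    (hAb : ∀ k j, ∃ C : ℝ, ∀ x : Fin n → ℝ, (∑ i, |x i| ≤ σ) → |A k j x| ≤ C)
    (hΔ : ContDiffOn ℝ 1 (fun x k => Δ k x) {x : Fin n → ℝ | ∑ i, |x i| ≤ σ})
    (heq : ∀ x : Fin n → ℝ, (∑ i, |x i| ≤ σ) → ∀ k,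
      HasDerivWithinAt (fun t => Δ k (Function.update x (ℓ k) t))
        (∑ j, A k j x * Δ j x)
        {t : ℝ | ∑ i, |Function.update x (ℓ k) t i| ≤ σ} (x (ℓ k)))
    (hdata : ∀ x : Fin n → ℝ, (∑ i, |x i| ≤ σ) → ∀ k, x (ℓ k) = 0 → Δ k x = 0) :
    ∃ ε > 0, ∀ x : Fin n → ℝ, (∑ i, |x i| ≤ ε) → ∀ k, Δ k x = 0 :=
  darboux_linear_homogeneous_vanishing_general n m σ hσ Δ ℓ A hAb hΔ heq hdata
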